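/- arXiv:1905.07660 — 2 statements merged into one kernel-verified Lean document; each statement's English description precedes it below -/
import Mathlib

section
/- The map M ↦ μ_M = inf{H(u) : u ∈ Σ, ‖u‖_{L²}² = M} is continuous on (0, ∞). -/
open MeasureTheory

noncomputable section

abbrev R2 := EuclideanSpace ℝ (Fin 2)

/-- Membership in the energy space `Σ`. -/
def InSigma (u : R2 → ℝ) : Prop :=
  Differentiable ℝ u ∧
    Integrable (fun x : R2 => u x ^ 2) ∧
    Integrable (fun x : R2 => ‖gradient u x‖ ^ 2) ∧
    Integrable (fun x : R2 => ‖x‖ ^ 2 * u x ^ 2) ∧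
    Integrable (fun x : R2 => u x ^ 4)

/-- The Gross–Pitaevskii Hamiltonian. -/
def Ham (u : R2 → ℝ) : ℝ :=
  (1/2) * (∫ x : R2, ‖gradient u x‖ ^ 2) + (1/2) * (∫ x : R2, ‖x‖ ^ 2 * u x ^ 2)
    + (1/4) * ∫ x : R2, u x ^ 4

/-- The minimal energy at mass `M`: `μ_M = inf{H(u) : u ∈ Σ, ‖u‖₂² = M}`. -/
def muM (M : ℝ) : ℝ :=
  sInf (Ham '' {u : R2 → ℝ | InSigma u ∧ (∫ x : R2, u x ^ 2) = M})

open Real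

/-! ### Gaussian integrability on `R2` -/

lemma normsq2 (x : R2) : ‖x‖^2 = x 0 ^2 + x 1 ^2 := by
  rw [EuclideanSpace.norm_eq, Real.sq_sqrt (by positivity)]
  simp [Fin.sum_univ_two, sq_abs]

lemma integrable_comp_phi {F : ℝ × ℝ → ℝ} (hF : Integrable F) :
    Integrable (fun x : R2 => F (x 0, x 1)) := by
  have hmp : MeasurePreserving
      ((MeasurableEquiv.toLp 2 (Fin 2 → ℝ)).symm.trans MeasurableEquiv.finTwoArrow)
      (volume : Measure R2) volume :=
    (volume_preserving_finTwoArrow ℝ).comp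
      (EuclideanSpace.volume_preserving_symm_measurableEquiv_toLp (Fin 2))
  exact (hmp.integrable_comp_emb (MeasurableEquiv.measurableEmbedding _)).mpr hF

lemma int1d_sq {b : ℝ} (hb : 0 < b) : Integrable fun x : ℝ => x^2 * exp (-b*x^2) := by
  have := integrable_rpow_mul_exp_neg_mul_sq hb (s := 2) (by norm_num)
  simpa [Real.rpow_natCast] using this

lemma gauss0 {b : ℝ} (hb : 0 < b) : Integrable fun x : R2 => exp (-b * ‖x‖^2) := by
  have h : Integrable (fun p : ℝ × ℝ => exp (-b*p.1^2) * exp (-b*p.2^2)) :=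
    (integrable_exp_neg_mul_sq hb).mul_prod (integrable_exp_neg_mul_sq hb)
  have h2 := integrable_comp_phi h
  refine h2.congr (Filter.Eventually.of_forall fun x => ?_)
  simp only [normsq2, ← Real.exp_add]
  ring_nf

lemma gauss2 {b : ℝ} (hb : 0 < b) : Integrable fun x : R2 => ‖x‖^2 * exp (-b * ‖x‖^2) := by
  have h : Integrable (fun p : ℝ × ℝ =>
      (p.1^2 * exp (-b*p.1^2)) * exp (-b*p.2^2) + exp (-b*p.1^2) * (p.2^2 * exp (-b*p.2^2))) :=
    ((int1d_sq hb).mul_prod (integrable_exp_neg_mul_sq hb)).add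
      ((integrable_exp_neg_mul_sq hb).mul_prod (int1d_sq hb))
  have h2 := integrable_comp_phi h
  refine h2.congr (Filter.Eventually.of_forall fun x => ?_)
  have he : exp (-b * (x 0 ^2 + x 1 ^2)) = exp (-b * x 0 ^2) * exp (-b * x 1 ^2) := by
    rw [← Real.exp_add]; ring_nf
  simp only [normsq2, he]
  ring

/-! ### The Gaussian witness -/

lemma toDual_symm_smul_innerSL (c : ℝ) (x : R2) :
    (InnerProductSpace.toDual ℝ R2).symm (c • innerSL ℝ x) = c • x := by
  apply (InnerProductSpace.toDual ℝ R2).injective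
  rw [LinearIsometryEquiv.apply_symm_apply]
  ext y
  simp [InnerProductSpace.toDual_apply_apply, inner_smul_left]

lemma gauss_hasGradient (x : R2) :
    HasGradientAt (fun y : R2 => exp (-‖y‖^2/2)) (-(exp (-‖x‖^2/2)) • x) x := by
  have h1 : HasFDerivAt (fun y : R2 => ‖y‖^2) ((2:ℕ) • innerSL ℝ x) x :=
    (hasStrictFDerivAt_norm_sq x).hasFDerivAt
  have heq : (fun y : R2 => -‖y‖^2/2) = fun y => (-1/2 : ℝ) * ‖y‖^2 := funext fun y => by ring
  have h2 : HasFDerivAt (fun y : R2 => -‖y‖^2/2) ((-(1:ℝ)) • innerSL ℝ x) x := by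
    rw [heq]
    have h := h1.const_mul (-1/2 : ℝ)
    refine h.congr_fderiv ?_
    ext y
    simp
    ring
  have h3 : HasFDerivAt (fun y : R2 => exp (-‖y‖^2/2))
      (exp (-‖x‖^2/2) • ((-(1:ℝ)) • innerSL ℝ x)) x :=
    (Real.hasDerivAt_exp (-‖x‖^2/2)).comp_hasFDerivAt (h₂ := Real.exp) x h2
  have h4 : HasFDerivAt (fun y : R2 => exp (-‖y‖^2/2))
      ((-(exp (-‖x‖^2/2))) • innerSL ℝ x) x := by
    convert h3 using 1
    rw [smul_smul]
    ring_nf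
  have h5 := h4.hasGradientAt
  rwa [toDual_symm_smul_innerSL] at h5

def u0 : R2 → ℝ := fun x => exp (-‖x‖^2/2)

lemma grad_u0 (x : R2) : gradient u0 x = -(u0 x) • x := (gauss_hasGradient x).gradient

lemma exp_pow4 (a : ℝ) : exp a ^ 4 = exp (4*a) := by
  rw [show (4:ℝ)*a = a+a+a+a by ring, Real.exp_add, Real.exp_add, Real.exp_add]; ring

lemma u0_sq (x : R2) : u0 x ^ 2 = exp (-1 * ‖x‖^2) := by
  simp only [u0, sq, ← Real.exp_add]; ring_nf

lemma u0_insigma : InSigma u0 := by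
  refine ⟨fun x => (gauss_hasGradient x).differentiableAt, ?_, ?_, ?_, ?_⟩
  · exact (gauss0 one_pos).congr (Filter.Eventually.of_forall fun x => (u0_sq x).symm)
  · refine (gauss2 one_pos).congr (Filter.Eventually.of_forall fun x => ?_)
    simp only [grad_u0, norm_smul, mul_pow, Real.norm_eq_abs, abs_neg, sq_abs, u0_sq]
    ring
  · refine (gauss2 one_pos).congr (Filter.Eventually.of_forall fun x => ?_)
    simp only [u0_sq]
  · refine (gauss0 two_pos).congr (Filter.Eventually.of_forall fun x => ?_)
    simp only [u0, exp_pow4]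
    ring_nf

lemma u0_mass_pos : 0 < ∫ x : R2, u0 x ^ 2 := by
  rw [integral_pos_iff_support_of_nonneg (fun x => sq_nonneg _) u0_insigma.2.1]
  have hs : Function.support (fun x : R2 => u0 x ^ 2) = Set.univ :=
    Set.eq_univ_of_forall fun x => ne_of_gt (by simp only [u0]; positivity)
  rw [hs]
  exact isOpen_univ.measure_pos volume ⟨0, trivial⟩

/-! ### Scaling -/

lemma grad_const_mul {u : R2 → ℝ} (hu : Differentiable ℝ u) (c : ℝ) (x : R2) :
    gradient (fun y => c * u y) x = c • gradient u x := by
  have h := (hu x).hasGradientAt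
  rw [hasGradientAt_iff_hasFDerivAt] at h
  have h2 : HasFDerivAt (fun y => c * u y)
      (c • (InnerProductSpace.toDual ℝ R2) (gradient u x)) x := h.const_mul c
  have h3 : HasGradientAt (fun y => c * u y) (c • gradient u x) x := by
    rw [hasGradientAt_iff_hasFDerivAt, _root_.map_smul]; exact h2
  exact h3.gradient

lemma insigma_const_mul {u : R2 → ℝ} (hu : InSigma u) (c : ℝ) :
    InSigma (fun x => c * u x) := by
  obtain ⟨hd, h2, h3, h4, h5⟩ := hu
  refine ⟨hd.const_mul c, ?_, ?_, ?_, ?_⟩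
  · have he : (fun x : R2 => (c * u x)^2) = fun x => c^2 * u x ^2 := funext fun x => by ring
    rw [he]; exact h2.const_mul _
  · have he : (fun x : R2 => ‖gradient (fun y => c * u y) x‖^2)
        = fun x => c^2 * ‖gradient u x‖^2 := funext fun x => by
      rw [grad_const_mul hd, norm_smul, mul_pow, Real.norm_eq_abs, sq_abs]
    rw [he]; exact h3.const_mul _
  · have he : (fun x : R2 => ‖x‖^2 * (c * u x)^2) = fun x => c^2 * (‖x‖^2 * u x^2) :=
      funext fun x => by ring
    rw [he]; exact h4.const_mul _
  · have he : (fun x : R2 => (c * u x)^4) = fun x => c^4 * u x^4 := funext fun x => by ring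
    rw [he]; exact h5.const_mul _

lemma mass_const_mul (u : R2 → ℝ) (c : ℝ) :
    ∫ x : R2, (c * u x)^2 = c^2 * ∫ x : R2, u x ^2 := by
  simp only [mul_pow]
  rw [integral_const_mul _ _]

lemma ham_const_mul {u : R2 → ℝ} (hd : Differentiable ℝ u) (c : ℝ) :
    Ham (fun x => c * u x) =
      c^2 * ((1/2) * (∫ x : R2, ‖gradient u x‖ ^ 2) + (1/2) * (∫ x : R2, ‖x‖ ^ 2 * u x ^ 2))
        + c^4 * ((1/4) * ∫ x : R2, u x ^ 4) := by
  unfold Ham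
  have e1 : (∫ x : R2, ‖gradient (fun y => c * u y) x‖ ^ 2)
      = c^2 * ∫ x : R2, ‖gradient u x‖^2 := by
    simp only [grad_const_mul hd, norm_smul, mul_pow, Real.norm_eq_abs, sq_abs]
    rw [integral_const_mul _ _]
  have e2 : (∫ x : R2, ‖x‖^2 * (c * u x)^2) = c^2 * ∫ x : R2, ‖x‖^2 * u x^2 := by
    have he : (fun x : R2 => ‖x‖^2 * (c*u x)^2) = fun x => c^2 * (‖x‖^2 * u x^2) :=
      funext fun x => by ring
    rw [he, integral_const_mul _ _]
  have e3 : (∫ x : R2, (c * u x)^4) = c^4 * ∫ x : R2, u x^4 := by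
    have he : (fun x : R2 => (c*u x)^4) = fun x => c^4 * u x^4 := funext fun x => by ring
    rw [he, integral_const_mul _ _]
  rw [e1, e2, e3]; ring

/-! ### Basic properties of `muM` -/

lemma ham_nonneg (u : R2 → ℝ) : 0 ≤ Ham u := by
  have h1 : 0 ≤ ∫ x : R2, ‖gradient u x‖ ^ 2 := integral_nonneg fun x => by positivity
  have h2 : 0 ≤ ∫ x : R2, ‖x‖ ^ 2 * u x ^ 2 := integral_nonneg fun x => by positivity
  have h3 : 0 ≤ ∫ x : R2, u x ^ 4 := integral_nonneg fun x => by positivity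
  unfold Ham; linarith

lemma ham_bddBelow (M : ℝ) :
    BddBelow (Ham '' {u : R2 → ℝ | InSigma u ∧ (∫ x : R2, u x ^ 2) = M}) := by
  refine ⟨0, fun y hy => ?_⟩
  obtain ⟨u, -, rfl⟩ := hy
  exact ham_nonneg u

lemma exists_mass {M : ℝ} (hM : 0 < M) :
    ∃ u : R2 → ℝ, InSigma u ∧ (∫ x : R2, u x ^ 2) = M := by
  have hm0 : 0 < ∫ x : R2, u0 x ^2 := u0_mass_pos
  set c := Real.sqrt (M / ∫ x : R2, u0 x ^2) with hc
  refine ⟨fun x => c * u0 x, insigma_const_mul u0_insigma c, ?_⟩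
  rw [mass_const_mul, hc, Real.sq_sqrt (le_of_lt (div_pos hM hm0))]
  field_simp

lemma set_nonempty {M : ℝ} (hM : 0 < M) :
    (Ham '' {u : R2 → ℝ | InSigma u ∧ (∫ x : R2, u x ^ 2) = M}).Nonempty := by
  obtain ⟨u, hu, hm⟩ := exists_mass hM
  exact ⟨Ham u, ⟨u, ⟨hu, hm⟩, rfl⟩⟩

lemma muM_le_scale {M M' : ℝ} (hM : 0 < M) (hM' : 0 < M') :
    muM M' ≤ max (M'/M) ((M'/M)^2) * muM M := by
  set k := max (M'/M) ((M'/M)^2) with hkdef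
  have hr : 0 < M'/M := div_pos hM' hM
  have hk : 0 < k := lt_of_lt_of_le hr (le_max_left _ _)
  have hstep : ∀ y ∈ Ham '' {u : R2 → ℝ | InSigma u ∧ (∫ x : R2, u x ^ 2) = M},
      muM M' / k ≤ y := by
    rintro y ⟨u, ⟨hu, hm⟩, rfl⟩
    set c := Real.sqrt (M'/M) with hcdef
    have hc2 : c^2 = M'/M := Real.sq_sqrt hr.le
    have hw : InSigma (fun x => c * u x) := insigma_const_mul hu c
    have hwm : (∫ x : R2, (c * u x)^2) = M' := by
      rw [mass_const_mul, hc2, hm]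
      field_simp
    have h1 : muM M' ≤ Ham (fun x => c * u x) :=
      csInf_le (ham_bddBelow M') ⟨_, ⟨hw, hwm⟩, rfl⟩
    set A := (1/2) * (∫ x : R2, ‖gradient u x‖ ^ 2)
      + (1/2) * (∫ x : R2, ‖x‖ ^ 2 * u x ^ 2) with hA
    set B := (1/4) * ∫ x : R2, u x ^ 4 with hB
    have hA0 : 0 ≤ A := by
      have h1' : 0 ≤ ∫ x : R2, ‖gradient u x‖ ^ 2 := integral_nonneg fun x => by positivity
      have h2' : 0 ≤ ∫ x : R2, ‖x‖ ^ 2 * u x ^ 2 := integral_nonneg fun x => by positivity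
      rw [hA]; linarith
    have hB0 : 0 ≤ B := by
      have h3' : 0 ≤ ∫ x : R2, u x ^ 4 := integral_nonneg fun x => by positivity
      rw [hB]; linarith
    have hck2 : c^2 ≤ k := by rw [hc2]; exact le_max_left _ _
    have hck4 : c^4 ≤ k := by
      have h4' : c^4 = (M'/M)^2 := by rw [show c^4 = (c^2)^2 by ring, hc2]
      rw [h4']; exact le_max_right _ _
    have hHu : Ham u = A + B := rfl
    have h2 : Ham (fun x => c * u x) ≤ k * Ham u := by
      rw [ham_const_mul hu.1 c, hHu, ← hA, ← hB]
      calc c^2 * A + c^4 * B ≤ k * A + k * B :=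
            add_le_add (mul_le_mul_of_nonneg_right hck2 hA0)
              (mul_le_mul_of_nonneg_right hck4 hB0)
        _ = k * (A + B) := by ring
    have h3 : muM M' ≤ Ham u * k := by
      rw [mul_comm]; exact h1.trans h2
    exact (div_le_iff₀ hk).mpr h3
  have hfin : muM M' / k ≤ muM M := le_csInf (set_nonempty hM) hstep
  calc muM M' = (muM M' / k) * k := by field_simp
    _ ≤ muM M * k := mul_le_mul_of_nonneg_right hfin hk.le
    _ = k * muM M := mul_comm _ _

/-- The map `M ↦ μ_M` is continuous on `(0, ∞)`. -/
theorem muM_continuousOn : ContinuousOn muM (Set.Ioi (0 : ℝ)) := by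
  intro a ha
  have ha' : (0:ℝ) < a := ha
  have hne : a ≠ 0 := ne_of_gt ha'
  -- the upper comparison function
  have hUc : ContinuousAt (fun M' : ℝ => max (M'/a) ((M'/a)^2) * muM a) a := by
    have h1 : ContinuousAt (fun M' : ℝ => M' / a) a := continuousAt_id.div continuousAt_const hne
    exact ((h1.max (h1.pow 2)).mul continuousAt_const)
  have hUval : max (a/a) ((a/a)^2) * muM a = muM a := by
    rw [div_self hne]; norm_num
  have hU : Filter.Tendsto (fun M' : ℝ => max (M'/a) ((M'/a)^2) * muM a)
      (nhdsWithin a (Set.Ioi 0)) (nhds (muM a)) := by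
    have := hUc.tendsto.mono_left (nhdsWithin_le_nhds (s := Set.Ioi 0))
    rwa [hUval] at this
  -- the lower comparison function
  have hLden : ContinuousAt (fun M' : ℝ => max (a/M') ((a/M')^2)) a := by
    have h1 : ContinuousAt (fun M' : ℝ => a / M') a :=
      continuousAt_const.div continuousAt_id hne
    exact h1.max (h1.pow 2)
  have hLdenval : max (a/a) ((a/a)^2) = 1 := by rw [div_self hne]; norm_num
  have hLc : ContinuousAt (fun M' : ℝ => muM a / max (a/M') ((a/M')^2)) a := by
    refine continuousAt_const.div hLden ?_
    rw [hLdenval]; norm_num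
  have hLval : muM a / max (a/a) ((a/a)^2) = muM a := by rw [hLdenval]; norm_num
  have hL : Filter.Tendsto (fun M' : ℝ => muM a / max (a/M') ((a/M')^2))
      (nhdsWithin a (Set.Ioi 0)) (nhds (muM a)) := by
    have := hLc.tendsto.mono_left (nhdsWithin_le_nhds (s := Set.Ioi 0))
    rwa [hLval] at this
  -- the squeeze
  have hup : ∀ᶠ M' in nhdsWithin a (Set.Ioi 0),
      muM M' ≤ max (M'/a) ((M'/a)^2) * muM a :=
    eventually_mem_nhdsWithin.mono fun M' hM' => muM_le_scale ha' hM'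
  have hlow : ∀ᶠ M' in nhdsWithin a (Set.Ioi 0),
      muM a / max (a/M') ((a/M')^2) ≤ muM M' := by
    refine eventually_mem_nhdsWithin.mono fun M' hM' => ?_
    have hM'0 : (0:ℝ) < M' := hM'
    have hK : 0 < max (a/M') ((a/M')^2) :=
      lt_of_lt_of_le (div_pos ha' hM'0) (le_max_left _ _)
    have h := muM_le_scale hM'0 ha'
    rw [div_le_iff₀ hK]
    rw [mul_comm] at h
    exact h
  exact tendsto_of_tendsto_of_tendsto_of_le_of_le' hL hU hlow hup
end
end

section
/- There exist constants c, C > 0 such that for all sufficiently large M, the constrained minimizer u_M of H with mass M satisfies c M^{3/2} ≤ ‖u_M‖_{L⁴}⁴ ≤ C M^{3/2}. -/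
open MeasureTheory

noncomputable section

open Real in
lemma gauss_int {b : ℝ} (hb : 0 < b) : ∫ x : R2, Real.exp (-b * ‖x‖^2) = π / b := by
  rw [GaussianFourier.integral_rexp_neg_mul_sq_norm hb]
  norm_num [finrank_euclideanSpace]

lemma gauss_integrable {b : ℝ} (hb : 0 < b) :
    Integrable (fun x : R2 => Real.exp (-b * ‖x‖^2)) := by
  have h := (GaussianFourier.integrable_cexp_neg_mul_sq_norm_add
    (b := (b:ℂ)) (by simpa using hb) 0 (0 : R2)).norm
  refine h.congr ?_
  filter_upwards with x
  have : (-(b:ℂ) * (‖x‖:ℂ)^2 + 0 * ((inner ℝ (0:R2) x : ℝ) : ℂ)) = ((-b*‖x‖^2 : ℝ) : ℂ) := by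
    push_cast; ring
  rw [this, ← Complex.ofReal_exp, Complex.norm_real, Real.norm_of_nonneg (Real.exp_pos _).le]

lemma moment_ptwise {b : ℝ} (hb : 0 < b) (x : R2) :
    ‖x‖^2 * Real.exp (-b * ‖x‖^2) ≤ (2/b) * Real.exp (-(b/2) * ‖x‖^2) := by
  have ht : (0:ℝ) ≤ ‖x‖^2 := by positivity
  set t := ‖x‖^2 with htdef
  have hE : Real.exp (-(b/2)*t) * Real.exp ((b/2)*t) = 1 := by
    rw [← Real.exp_add]; simp
  have hsle : (b/2)*t ≤ Real.exp ((b/2)*t) := by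
    linarith [Real.add_one_le_exp ((b/2)*t)]
  have h2 : t * Real.exp (-(b/2)*t) ≤ 2/b := by
    rw [le_div_iff₀ hb]
    nlinarith [mul_le_mul_of_nonneg_right hsle (Real.exp_pos (-(b/2)*t)).le,
      Real.exp_pos (-(b/2)*t)]
  have hsplit : Real.exp (-b*t) = Real.exp (-(b/2)*t) * Real.exp (-(b/2)*t) := by
    rw [← Real.exp_add]; ring_nf
  calc t * Real.exp (-b*t) = (t * Real.exp (-(b/2)*t)) * Real.exp (-(b/2)*t) := by
        rw [hsplit]; ring
    _ ≤ (2/b) * Real.exp (-(b/2)*t) :=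
        mul_le_mul_of_nonneg_right h2 (Real.exp_pos _).le

lemma moment_integrable {b : ℝ} (hb : 0 < b) :
    Integrable (fun x : R2 => ‖x‖^2 * Real.exp (-b * ‖x‖^2)) := by
  refine Integrable.mono ((gauss_integrable (by positivity : (0:ℝ) < b/2)).const_mul (2/b))
    ((by fun_prop : Continuous fun x : R2 => ‖x‖^2 * Real.exp (-b*‖x‖^2)).aestronglyMeasurable) ?_
  filter_upwards with x
  rw [Real.norm_of_nonneg (by positivity), Real.norm_of_nonneg (by positivity)]
  exact moment_ptwise hb x

open Real in
lemma moment_bound {b : ℝ} (hb : 0 < b) :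
    ∫ x : R2, ‖x‖^2 * Real.exp (-b * ‖x‖^2) ≤ 4 * π / b^2 := by
  calc ∫ x : R2, ‖x‖^2 * Real.exp (-b * ‖x‖^2)
      ≤ ∫ x : R2, (2/b) * Real.exp (-(b/2) * ‖x‖^2) := by
        refine integral_mono (moment_integrable hb)
          ((gauss_integrable (by positivity : (0:ℝ) < b/2)).const_mul (2/b)) ?_
        exact fun x => moment_ptwise hb x
    _ = (2/b) * (π / (b/2)) := by rw [integral_const_mul, gauss_int (by positivity)]
    _ = 4 * π / b^2 := by field_simp; ring

lemma gauss_gradient (a b : ℝ) (x : R2) :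
    HasGradientAt (fun y : R2 => a * Real.exp (-b * ‖y‖^2))
      ((-2 * b * (a * Real.exp (-b * ‖x‖^2))) • x) x := by
  have h1 : HasFDerivAt (fun y : R2 => ‖y‖^2) (2 • (innerSL ℝ x)) x :=
    (hasStrictFDerivAt_norm_sq x).hasFDerivAt
  have h2 : HasDerivAt (fun t : ℝ => a * Real.exp (-b * t))
      (a * Real.exp (-b * ‖x‖^2) * (-b)) (‖x‖^2) := by
    have := ((hasDerivAt_id (‖x‖^2)).const_mul (-b)).exp.const_mul a
    simpa [mul_comm, mul_assoc, mul_left_comm] using this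
  have h3 := h2.comp_hasFDerivAt x h1
  rw [hasGradientAt_iff_hasFDerivAt]
  convert h3 using 1
  · ext; rfl
  · rfl
  ext y
  simp [InnerProductSpace.toDual_apply_apply, real_inner_smul_left, two_smul]
  ring

open Real in
lemma gauss_sigma {a b : ℝ} (hb : 0 < b) :
    InSigma (fun x : R2 => a * Real.exp (-b * ‖x‖^2)) ∧
    (∫ x : R2, (a * Real.exp (-b * ‖x‖^2)) ^ 2) = a^2 * (π / (2*b)) ∧
    Ham (fun x : R2 => a * Real.exp (-b * ‖x‖^2)) ≤
      2*π*a^2 + π*a^2/(2*b^2) + a^4*π/(16*b) := by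
  set v : R2 → ℝ := fun x => a * Real.exp (-b * ‖x‖^2) with hv
  have hgrad : ∀ x, gradient v x = (-2 * b * v x) • x :=
    fun x => (gauss_gradient a b x).gradient
  have hsq : ∀ x : R2, v x ^ 2 = a^2 * Real.exp (-(2*b) * ‖x‖^2) := by
    intro x
    simp only [hv, mul_pow, ← Real.exp_add]
    rw [pow_two (Real.exp _), ← Real.exp_add]
    ring_nf
  have h4 : ∀ x : R2, v x ^ 4 = a^4 * Real.exp (-(4*b) * ‖x‖^2) := by
    intro x
    have : v x ^ 4 = (v x ^ 2)^2 := by ring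
    rw [this, hsq, mul_pow, pow_two (Real.exp _), ← Real.exp_add]
    ring_nf
  have hgradsq : ∀ x, ‖gradient v x‖^2 =
      (4*b^2*a^2) * (‖x‖^2 * Real.exp (-(2*b) * ‖x‖^2)) := by
    intro x
    rw [hgrad, norm_smul, Real.norm_eq_abs, mul_pow, sq_abs]
    rw [show (-2 * b * v x)^2 = 4*b^2 * v x ^2 by ring, hsq]
    ring
  have h2b : (0:ℝ) < 2*b := by linarith
  have h4b : (0:ℝ) < 4*b := by linarith
  have hint2 : Integrable (fun x : R2 => v x ^ 2) := by
    simp only [hsq]; exact (gauss_integrable h2b).const_mul _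
  have hint4 : Integrable (fun x : R2 => v x ^ 4) := by
    simp only [h4]; exact (gauss_integrable h4b).const_mul _
  have hintV : Integrable (fun x : R2 => ‖x‖^2 * v x ^ 2) := by
    simp only [hsq]
    have := (moment_integrable h2b).const_mul (a^2)
    exact this.congr (by filter_upwards with x; ring)
  have hintK : Integrable (fun x : R2 => ‖gradient v x‖ ^ 2) := by
    simp only [hgradsq]; exact (moment_integrable h2b).const_mul _
  have hdiff : Differentiable ℝ v := fun x => (gauss_gradient a b x).differentiableAt
  refine ⟨⟨hdiff, hint2, hintK, hintV, hint4⟩, ?_, ?_⟩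
  · show (∫ x : R2, v x ^ 2) = _; simp only [hsq]
    rw [integral_const_mul, gauss_int h2b]
  · have hK : (∫ x : R2, ‖gradient v x‖ ^ 2) ≤ 4*π*a^2 := by
      simp only [hgradsq]
      rw [integral_const_mul]
      have hm := moment_bound h2b
      have hb2 : (4:ℝ)*π/(2*b)^2 = π/b^2 := by field_simp; ring
      rw [hb2] at hm
      calc 4*b^2*a^2 * ∫ x : R2, ‖x‖^2 * Real.exp (-(2*b)*‖x‖^2)
          ≤ 4*b^2*a^2 * (π/b^2) := by
            apply mul_le_mul_of_nonneg_left hm (by positivity)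
        _ = 4*π*a^2 := by field_simp
    have hV : (∫ x : R2, ‖x‖^2 * v x ^ 2) ≤ π*a^2/b^2 := by
      have : (fun x : R2 => ‖x‖^2 * v x ^2)
          = fun x => a^2 * (‖x‖^2 * Real.exp (-(2*b)*‖x‖^2)) := by
        funext x; rw [hsq]; ring
      rw [this, integral_const_mul]
      have hm := moment_bound h2b
      have hb2 : (4:ℝ)*π/(2*b)^2 = π/b^2 := by field_simp; ring
      rw [hb2] at hm
      calc a^2 * ∫ x : R2, ‖x‖^2 * Real.exp (-(2*b)*‖x‖^2)
          ≤ a^2 * (π/b^2) := mul_le_mul_of_nonneg_left hm (by positivity)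
        _ = π*a^2/b^2 := by ring
    have hP : (∫ x : R2, v x ^ 4) = a^4 * (π/(4*b)) := by
      simp only [h4]; rw [integral_const_mul, gauss_int h4b]
    rw [Ham, hP]
    have hπ := Real.pi_pos
    have h1 : (1:ℝ)/2 * (∫ x : R2, ‖gradient v x‖ ^ 2) ≤ 2*π*a^2 := by linarith
    have h2 : (1:ℝ)/2 * (∫ x : R2, ‖x‖^2 * v x ^ 2) ≤ π*a^2/(2*b^2) := by
      have e : π*a^2/(2*b^2) = (1/2)*(π*a^2/b^2) := by ring
      rw [e]; linarith
    have h3 : (1:ℝ)/4 * (a^4 * (π/(4*b))) = a^4*π/(16*b) := by ring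
    linarith

open Real in
lemma vol_ball (R : ℝ) (hR : 0 ≤ R) :
    (volume (Metric.ball (0:R2) R)).toReal = π * R^2 := by
  rw [EuclideanSpace.volume_ball]
  simp only [Fintype.card_fin]
  rw [show ((2:ℕ):ℝ)/2 + 1 = 2 by norm_num]
  rw [Real.Gamma_two]
  rw [Real.sq_sqrt Real.pi_pos.le]
  rw [ENNReal.toReal_mul, ENNReal.toReal_pow, ENNReal.toReal_ofReal hR,
    ENNReal.toReal_ofReal (by positivity)]
  ring

open Real in
lemma interp {u : R2 → ℝ} (hu : InSigma u) {R : ℝ} (hR : 0 < R) :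
    ∫ x : R2, u x ^ 2 ≤ (1/R^2) * (∫ x : R2, ‖x‖^2 * u x ^ 2)
      + Real.sqrt π * R * Real.sqrt (∫ x : R2, u x ^ 4) := by
  obtain ⟨hdiff, hint2, hintK, hintV, hint4⟩ := hu
  have hcont : Continuous u := hdiff.continuous
  set B := Metric.ball (0:R2) R with hB
  have hBm : MeasurableSet B := measurableSet_ball
  have hsplit : ∫ x : R2, u x ^ 2 = (∫ x in B, u x ^ 2) + ∫ x in Bᶜ, u x ^ 2 := by
    rw [integral_add_compl hBm hint2]
  have htail : (∫ x in Bᶜ, u x ^ 2) ≤ (1/R^2) * ∫ x : R2, ‖x‖^2 * u x ^ 2 := by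
    have h1 : (∫ x in Bᶜ, u x ^ 2) ≤ ∫ x in Bᶜ, (1/R^2) * (‖x‖^2 * u x ^ 2) := by
      refine setIntegral_mono_on hint2.integrableOn
        ((hintV.const_mul (1/R^2)).integrableOn) hBm.compl ?_
      intro x hx
      have hxR : R ≤ ‖x‖ := by
        simp only [hB, Set.mem_compl_iff, Metric.mem_ball, dist_zero_right, not_lt] at hx
        exact hx
      have hR2 : R^2 ≤ ‖x‖^2 := by nlinarith [norm_nonneg x]
      have hu2 : (0:ℝ) ≤ u x ^ 2 := sq_nonneg _
      rw [← mul_assoc]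
      have : (1:ℝ) ≤ (1/R^2) * ‖x‖^2 := by
        rw [div_mul_eq_mul_div, one_mul, le_div_iff₀ (by positivity)]
        linarith
      nlinarith
    have h2 : (∫ x in Bᶜ, (1/R^2) * (‖x‖^2 * u x ^ 2))
        ≤ (1/R^2) * ∫ x : R2, ‖x‖^2 * u x ^ 2 := by
      rw [integral_const_mul]
      refine mul_le_mul_of_nonneg_left ?_ (by positivity)
      exact setIntegral_le_integral hintV
        (by filter_upwards with x using by positivity)
    linarith
  have hball : (∫ x in B, u x ^ 2) ≤ Real.sqrt π * R * Real.sqrt (∫ x : R2, u x ^ 4) := by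
    have hfin : IsFiniteMeasure (volume.restrict B) :=
      ⟨by rw [Measure.restrict_apply_univ]; exact measure_ball_lt_top⟩
    have hpq : Real.HolderConjugate 2 2 := Real.HolderConjugate.two_two
    have hmf : MemLp (fun x : R2 => u x ^ 2) (ENNReal.ofReal 2) (volume.restrict B) := by
      rw [show ENNReal.ofReal 2 = 2 by norm_num]
      refine (memLp_two_iff_integrable_sq ?_).2 ?_
      · exact (hcont.pow 2).aestronglyMeasurable.restrict
      · refine hint4.integrableOn.congr ?_
        filter_upwards with x
        ring
    have hmg : MemLp (fun _ : R2 => (1:ℝ)) (ENNReal.ofReal 2) (volume.restrict B) :=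
      memLp_const 1
    have hCS := integral_mul_le_Lp_mul_Lq_of_nonneg hpq
      (f := fun x : R2 => u x ^ 2) (g := fun _ => (1:ℝ))
      (μ := volume.restrict B)
      (by filter_upwards with x using sq_nonneg _)
      (by filter_upwards with x using zero_le_one) hmf hmg
    simp only [mul_one] at hCS
    have e1 : (∫ x in B, (u x ^ 2) ^ (2:ℝ)) = ∫ x in B, u x ^ 4 := by
      refine integral_congr_ae ?_
      filter_upwards with x
      rw [Real.rpow_two]; ring
    have e2 : (∫ x in B, (1:ℝ) ^ (2:ℝ)) = π * R^2 := by
      simp only [Real.one_rpow]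
      rw [setIntegral_const, smul_eq_mul, mul_one]; exact vol_ball R hR.le
    rw [e1, e2] at hCS
    have hP4 : (∫ x in B, u x ^ 4) ≤ ∫ x : R2, u x ^ 4 :=
      setIntegral_le_integral hint4 (by filter_upwards with x using by positivity)
    have hPnn : (0:ℝ) ≤ ∫ x in B, u x ^ 4 :=
      integral_nonneg fun x => by positivity
    calc (∫ x in B, u x ^ 2) ≤ (∫ x in B, u x ^ 4) ^ ((1:ℝ)/2) * (π * R^2) ^ ((1:ℝ)/2) := hCS
      _ ≤ (∫ x : R2, u x ^ 4) ^ ((1:ℝ)/2) * (π * R^2) ^ ((1:ℝ)/2) := by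
          refine mul_le_mul_of_nonneg_right ?_ (by positivity)
          exact Real.rpow_le_rpow hPnn hP4 (by norm_num)
      _ = Real.sqrt π * R * Real.sqrt (∫ x : R2, u x ^ 4) := by
          rw [← Real.sqrt_eq_rpow, ← Real.sqrt_eq_rpow, Real.sqrt_mul Real.pi_pos.le,
            Real.sqrt_sq hR.le]
          ring
  linarith [hsplit, htail, hball]

open Real
set_option maxHeartbeats 1000000

/-- For all sufficiently large masses `M`, the constrained minimizer `u_M` of `H`
satisfies `c M^{3/2} ≤ ‖u_M‖₄⁴ ≤ C M^{3/2}`. -/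
theorem L4_norm_of_minimizer_large_mass :
    ∃ c C M₀ : ℝ, 0 < c ∧ 0 < C ∧ 0 < M₀ ∧
      ∀ (M : ℝ) (u : R2 → ℝ), M₀ ≤ M →
        InSigma u → (∫ x : R2, u x ^ 2) = M →
        (∀ v : R2 → ℝ, InSigma v → (∫ x : R2, v x ^ 2) = M → Ham u ≤ Ham v) →
        c * M ^ ((3:ℝ)/2) ≤ (∫ x : R2, u x ^ 4) ∧
          (∫ x : R2, u x ^ 4) ≤ C * M ^ ((3:ℝ)/2) := by
  refine ⟨1/(96*π), 24, 1, by positivity, by norm_num, one_pos, ?_⟩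
  intro M u hM1 hu hmass hmin
  have hπ := Real.pi_pos
  have hM0 : (0:ℝ) < M := lt_of_lt_of_le one_pos hM1
  set s := Real.sqrt M with hs
  have hs2 : s^2 = M := Real.sq_sqrt hM0.le
  have hs0 : 0 < s := Real.sqrt_pos.2 hM0
  have hs1 : 1 ≤ s := by
    rw [hs, show (1:ℝ) = Real.sqrt 1 by simp]
    exact Real.sqrt_le_sqrt hM1
  have hM32 : M ^ ((3:ℝ)/2) = M * s := by
    rw [show (3:ℝ)/2 = 1 + 1/2 by norm_num, Real.rpow_add hM0, Real.rpow_one,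
      hs, Real.sqrt_eq_rpow]
  -- Gaussian competitor
  set b : ℝ := 1/s with hbdef
  have hb : 0 < b := by positivity
  set a : ℝ := Real.sqrt (2*M/(π*s)) with hadef
  have ha2 : a^2 = 2*M/(π*s) := Real.sq_sqrt (by positivity)
  obtain ⟨hvS, hvmass, hvham⟩ := gauss_sigma (a := a) hb
  have hvmassM : (∫ x : R2, (a * Real.exp (-b * ‖x‖^2)) ^ 2) = M := by
    rw [hvmass, ha2, hbdef]
    field_simp
  have hHamv : Ham (fun x : R2 => a * Real.exp (-b * ‖x‖^2)) ≤ 6*M*s := by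
    refine le_trans hvham ?_
    have e1 : 2*π*a^2 = 4*M/s := by rw [ha2]; field_simp; ring
    have e2 : π*a^2/(2*b^2) = M*s := by
      rw [ha2, hbdef]; field_simp
    have e3 : a^4*π/(16*b) = M*s/(4*π) := by
      have h44 : a^4 = (a^2)^2 := by ring
      rw [h44, ha2, hbdef]
      field_simp
      linear_combination (-16) * hs2
    rw [e1, e2, e3]
    have h1 : 4*M/s ≤ 4*M*s := by
      rw [div_le_iff₀ hs0]
      nlinarith
    have h2 : M*s/(4*π) ≤ M*s := by
      rw [div_le_iff₀ (by positivity)]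
      nlinarith [mul_pos hM0 hs0, Real.pi_gt_three]
    linarith
  have hHamu : Ham u ≤ 6*M*s := le_trans (hmin _ hvS hvmassM) hHamv
  obtain ⟨hdiff, hint2, hintK, hintV, hint4⟩ := hu
  have hK0 : (0:ℝ) ≤ ∫ x : R2, ‖gradient u x‖^2 := integral_nonneg fun x => by positivity
  have hV0 : (0:ℝ) ≤ ∫ x : R2, ‖x‖^2 * u x ^2 := integral_nonneg fun x => by positivity
  have hP0 : (0:ℝ) ≤ ∫ x : R2, u x ^4 := integral_nonneg fun x => by positivity
  have hHamdef : Ham u = (1/2) * (∫ x : R2, ‖gradient u x‖ ^ 2)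
      + (1/2) * (∫ x : R2, ‖x‖ ^ 2 * u x ^ 2) + (1/4) * ∫ x : R2, u x ^ 4 := rfl
  rw [hHamdef] at hHamu
  have hPle : (∫ x : R2, u x ^ 4) ≤ 24*M*s := by linarith
  have hVle : (∫ x : R2, ‖x‖ ^ 2 * u x ^ 2) ≤ 12*M*s := by linarith
  constructor
  · -- lower bound
    have hR0 : (0:ℝ) < Real.sqrt (24*s) := Real.sqrt_pos.2 (by positivity)
    have hR2 : (Real.sqrt (24*s))^2 = 24*s := Real.sq_sqrt (by positivity)
    have hinterp := interp ⟨hdiff, hint2, hintK, hintV, hint4⟩ hR0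
    rw [hmass, hR2] at hinterp
    have h1 : (1/(24*s)) * (∫ x : R2, ‖x‖ ^ 2 * u x ^ 2) ≤ M/2 := by
      rw [div_mul_eq_mul_div, one_mul, div_le_iff₀ (by positivity)]
      nlinarith [hVle]
    have h2 : M/2 ≤ Real.sqrt π * Real.sqrt (24*s) * Real.sqrt (∫ x : R2, u x ^ 4) := by
      linarith
    have h3 : (M/2)^2
        ≤ (Real.sqrt π * Real.sqrt (24*s) * Real.sqrt (∫ x : R2, u x ^ 4))^2 :=
      pow_le_pow_left₀ (by positivity) h2 2
    have h4 : (Real.sqrt π * Real.sqrt (24*s) * Real.sqrt (∫ x : R2, u x ^ 4))^2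
        = π * (24*s) * (∫ x : R2, u x ^ 4) := by
      rw [mul_pow, mul_pow, Real.sq_sqrt hπ.le, Real.sq_sqrt (by positivity : (0:ℝ) ≤ 24*s),
        Real.sq_sqrt hP0]
    rw [h4] at h3
    rw [hM32, div_mul_eq_mul_div, one_mul, div_le_iff₀ (by positivity)]
    -- goal : M * s ≤ (∫ u⁴) * (96 * π)
    have hMM : M*s*s = M^2 := by rw [← hs2]; ring
    have h5 : M^2 ≤ ((∫ x : R2, u x ^ 4) * (96*π)) * s := by linarith
    exact le_of_mul_le_mul_right (by linarith) hs0
  · rw [hM32]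
    linarith
end
end
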